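/- Special case of the addition formula: for Im(ρ) > 0, θ(ρ,z)² = θ[0,0](2ρ,0)·θ[0,0](2ρ,2z) + θ[1/2,0](2ρ,0)·θ[1/2,0](2ρ,2z), where θ(ρ,z) = θ[0,0](ρ,z). -/

import Mathlib

open Complex

/-- The theta function with characteristics,
`θ[c',c''](τ,z) = Σ_{m∈ℤ} exp(2πi[τ(m+c')²/2 + (m+c')(z+c'')])`. -/
noncomputable def theta (c' c'' : ℝ) (τ z : ℂ) : ℂ :=
  ∑' m : ℤ, Complex.exp (2 * Real.pi * Complex.I *
    (τ * ((m : ℂ) + (c' : ℂ)) ^ 2 / 2 + ((m : ℂ) + (c' : ℂ)) * (z + (c'' : ℂ))))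

/-- A single term of the theta series with characteristic `c` (second characteristic `0`). -/
noncomputable def thetaTerm (c : ℝ) (τ w : ℂ) (m : ℤ) : ℂ :=
  Complex.exp (2 * Real.pi * Complex.I *
    (τ * ((m : ℂ) + (c : ℂ)) ^ 2 / 2 + ((m : ℂ) + (c : ℂ)) * w))

lemma theta_eq_tsum_thetaTerm (c : ℝ) (τ w : ℂ) :
    theta c 0 τ w = ∑' m : ℤ, thetaTerm c τ w m := by
  simp only [theta, thetaTerm, Complex.ofReal_zero, add_zero]

lemma thetaTerm_eq (c : ℝ) (τ w : ℂ) (m : ℤ) :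
    thetaTerm c τ w m = jacobiTheta₂_term m ((c : ℂ) * τ + w) τ *
      Complex.exp ((Real.pi : ℂ) * Complex.I * τ * (c : ℂ) ^ 2 +
        2 * Real.pi * Complex.I * (c : ℂ) * w) := by
  rw [thetaTerm, jacobiTheta₂_term, ← Complex.exp_add]
  congr 1
  ring

lemma summable_norm_thetaTerm (c : ℝ) {τ : ℂ} (hτ : 0 < τ.im) (w : ℂ) :
    Summable fun m : ℤ => ‖thetaTerm c τ w m‖ := by
  simp only [thetaTerm_eq, norm_mul]
  apply Summable.mul_right
  apply Summable.of_nonneg_of_le (fun n => norm_nonneg _)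
    (fun n => norm_jacobiTheta₂_term_le hτ (le_refl |((c : ℂ) * τ + w).im|) le_rfl n)
  simpa using summable_pow_mul_jacobiTheta₂_term_bound |((c : ℂ) * τ + w).im| hτ 0

set_option maxHeartbeats 1000000 in
/-- The classical addition formula:
`θ(ρ,z)² = θ[0,0](2ρ,0)·θ[0,0](2ρ,2z) + θ[1/2,0](2ρ,0)·θ[1/2,0](2ρ,2z)`. -/
theorem theta_squared_addition (ρ : ℂ) (hρ : 0 < ρ.im) (z : ℂ) :
    theta 0 0 ρ z ^ 2 =
      theta 0 0 (2 * ρ) 0 * theta 0 0 (2 * ρ) (2 * z) +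
        theta (1 / 2) 0 (2 * ρ) 0 * theta (1 / 2) 0 (2 * ρ) (2 * z) := by
  have h2ρ : 0 < (2 * ρ).im := by
    have : (2 * ρ).im = 2 * ρ.im := by simp [Complex.mul_im]
    rw [this]; linarith
  set f : ℤ → ℂ := thetaTerm 0 ρ z with hf
  have hsf : Summable fun m : ℤ => ‖f m‖ := summable_norm_thetaTerm 0 hρ z
  have hsg1 : Summable fun m : ℤ => ‖thetaTerm 0 (2 * ρ) 0 m‖ :=
    summable_norm_thetaTerm 0 h2ρ 0
  have hsg2 : Summable fun m : ℤ => ‖thetaTerm 0 (2 * ρ) (2 * z) m‖ :=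
    summable_norm_thetaTerm 0 h2ρ (2 * z)
  have hsh1 : Summable fun m : ℤ => ‖thetaTerm (1 / 2) (2 * ρ) 0 m‖ :=
    summable_norm_thetaTerm (1 / 2) h2ρ 0
  have hsh2 : Summable fun m : ℤ => ‖thetaTerm (1 / 2) (2 * ρ) (2 * z) m‖ :=
    summable_norm_thetaTerm (1 / 2) h2ρ (2 * z)
  set F : ℤ × ℤ → ℂ := fun p => f p.1 * f p.2 with hF
  -- the total sum
  have hFsum : HasSum F (theta 0 0 ρ z ^ 2) := by
    have h := (summable_mul_of_summable_norm hsf hsf).hasSum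
    rwa [← tsum_mul_tsum_of_summable_norm hsf hsf, ← theta_eq_tsum_thetaTerm, ← sq] at h
  -- the two injections
  set i1 : ℤ × ℤ → ℤ × ℤ := fun p => (p.1 + p.2, p.1 - p.2) with hi1
  set i2 : ℤ × ℤ → ℤ × ℤ := fun p => (p.1 + p.2 + 1, p.1 - p.2) with hi2
  have hinj1 : Function.Injective i1 := by
    intro p q h
    simp only [hi1, Prod.mk.injEq, Prod.ext_iff] at h ⊢
    omega
  have hinj2 : Function.Injective i2 := by
    intro p q h
    simp only [hi2, Prod.mk.injEq, Prod.ext_iff] at h ⊢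
    omega
  have hrange : Set.range i2 = (Set.range i1)ᶜ := by
    ext ⟨m, n⟩
    simp only [hi1, hi2, Set.mem_range, Set.mem_compl_iff, Prod.exists, Prod.mk.injEq,
      not_exists]
    constructor
    · rintro ⟨a, b, h1, h2⟩ a' b' ⟨h3, h4⟩
      omega
    · intro h
      have hodd : Odd (m + n) := by
        rcases Int.even_or_odd (m + n) with he | ho
        · exfalso
          obtain ⟨k, hk⟩ := he
          exact h k (m - k) ⟨by omega, by omega⟩
        · exact ho
      obtain ⟨k, hk⟩ := hodd
      exact ⟨k, m - 1 - k, by omega, by omega⟩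
  -- the even part
  have hA : HasSum (F ∘ i1)
      (theta 0 0 (2 * ρ) 0 * theta 0 0 (2 * ρ) (2 * z)) := by
    have h := (summable_mul_of_summable_norm hsg2 hsg1).hasSum
    rw [← tsum_mul_tsum_of_summable_norm hsg2 hsg1, ← theta_eq_tsum_thetaTerm,
      ← theta_eq_tsum_thetaTerm] at h
    rw [mul_comm]
    convert h using 1
    · rfl
    funext p
    simp only [hF, hf, Function.comp_apply, hi1, thetaTerm, ← Complex.exp_add]
    congr 1
    push_cast
    ring
  -- the odd part
  have hB : HasSum (F ∘ i2)
      (theta (1 / 2) 0 (2 * ρ) 0 * theta (1 / 2) 0 (2 * ρ) (2 * z)) := by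
    have h := (summable_mul_of_summable_norm hsh2 hsh1).hasSum
    rw [← tsum_mul_tsum_of_summable_norm hsh2 hsh1, ← theta_eq_tsum_thetaTerm,
      ← theta_eq_tsum_thetaTerm] at h
    rw [mul_comm]
    convert h using 1
    · rfl
    funext p
    simp only [hF, hf, Function.comp_apply, hi2, thetaTerm, ← Complex.exp_add]
    congr 1
    push_cast
    ring
  have hA' : HasSum (fun x : Set.range i1 => F x)
      (theta 0 0 (2 * ρ) 0 * theta 0 0 (2 * ρ) (2 * z)) :=
    hinj1.hasSum_range_iff.mpr hA
  have hB' : HasSum (fun x : Set.range i2 => F x)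
      (theta (1 / 2) 0 (2 * ρ) 0 * theta (1 / 2) 0 (2 * ρ) (2 * z)) :=
    hinj2.hasSum_range_iff.mpr hB
  have hcompl : IsCompl (Set.range i1) (Set.range i2) := by
    rw [hrange]; exact isCompl_compl
  exact hFsum.unique (HasSum.add_isCompl (f := F) hcompl hA' hB')
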